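/- Let 0 < α < 1 and define m : ℝ → ℝ by m(y) := (α/Γ(1−α)) · ∫₀^∞ (4πs)^{−1/2} exp(−y²/(4s)) · e^{−s} s^{−1−α} ds. Then for every real ξ, (1+ξ²)^α = 1 + ∫_ℝ (1 − cos(yξ)) · m(y) dy. -/

import Mathlib

/-! For `λ > 0` integration by parts against the Gamma integral gives
`λ^α = (α/Γ(1-α)) ∫₀^∞ (1 - e^{-λs}) s^{-1-α} ds`; subtracting the cases `λ = 1 + ξ²` and `λ = 1`,
`(1+ξ²)^α - 1 = (α/Γ(1-α)) ∫₀^∞ (1 - e^{-sξ²}) e^{-s} s^{-1-α} ds`.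
The heat kernel `(4πs)^{-1/2} e^{-y²/(4s)}` is the density of the centred Gaussian of variance `2s`,
whose characteristic function gives `1 - e^{-sξ²} = ∫ (1 - cos(yξ)) (4πs)^{-1/2} e^{-y²/(4s)} dy`.
Substituting this and exchanging the two integrals (the integrand is nonnegative) gives the
Lévy–Khinchine formula. -/

/-- The Lévy density `m(y) = (α/Γ(1−α)) ∫₀^∞ (4πs)^{−1/2} e^{−y²/(4s)} e^{−s} s^{−1−α} ds`. -/
noncomputable def levyDensity (α : ℝ) (y : ℝ) : ℝ :=
  α / Real.Gamma (1 - α) *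
    ∫ s in Set.Ioi (0 : ℝ),
      (4 * Real.pi * s) ^ (-(1 / 2) : ℝ) * Real.exp (-y ^ 2 / (4 * s)) *
        Real.exp (-s) * s ^ (-1 - α)

open MeasureTheory ProbabilityTheory Real Set Filter Topology

lemma one_sub_exp_neg_nonneg {x : ℝ} (hx : 0 ≤ x) : 0 ≤ 1 - exp (-x) := by
  simpa using exp_le_one_iff.2 (neg_nonpos.2 hx)

lemma one_sub_exp_neg_le_self (x : ℝ) : 1 - exp (-x) ≤ x := by
  linarith [one_sub_le_exp_neg x]

lemma one_sub_exp_neg_le_one (x : ℝ) : 1 - exp (-x) ≤ 1 := by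
  linarith [exp_pos (-x)]

noncomputable def heatKernel (s y : ℝ) : ℝ :=
  (4 * π * s) ^ (-(1 / 2) : ℝ) * exp (-y ^ 2 / (4 * s))

lemma heatKernel_eq_gaussianPDFReal {s : ℝ} (hs : 0 < s) :
    heatKernel s = gaussianPDFReal 0 (2 * s).toNNReal := by
  ext y
  rw [heatKernel, gaussianPDFReal, Real.coe_toNNReal _ (by positivity), sqrt_eq_rpow,
    rpow_neg (by positivity), sub_zero]
  ring_nf

lemma integral_cos_mul_gaussianReal (μ : ℝ) (v : NNReal) (t : ℝ) :
    ∫ x, cos (t * x) ∂gaussianReal μ v = exp (-(v * t ^ 2 / 2)) * cos (t * μ) := by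
  have hint : Integrable (fun x : ℝ => Complex.exp (t * x * Complex.I)) (gaussianReal μ v) :=
    (integrable_const (1 : ℝ)).mono' (by fun_prop) (ae_of_all _ fun x => by
      rw [← Complex.ofReal_mul, Complex.norm_exp_ofReal_mul_I])
  have h := congrArg Complex.re (charFun_gaussianReal (μ := μ) (v := v) t)
  rw [charFun_apply_real, ← RCLike.re_to_complex, ← integral_re hint] at h
  simpa [Complex.exp_re, ← Complex.ofReal_mul, ← Complex.ofReal_pow] using h

lemma abs_one_sub_cos_le_two (x : ℝ) : |1 - cos x| ≤ 2 := by
  rw [abs_le]; constructor <;> linarith [neg_one_le_cos x, cos_le_one x]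

lemma integrable_one_sub_cos_mul_heatKernel {s : ℝ} (hs : 0 < s) (ξ : ℝ) :
    Integrable fun y => (1 - cos (y * ξ)) * heatKernel s y := by
  rw [heatKernel_eq_gaussianPDFReal hs]
  exact (integrable_gaussianPDFReal _ _).bdd_mul (c := 2) (by fun_prop)
    (ae_of_all _ fun y => abs_one_sub_cos_le_two _)

lemma integral_one_sub_cos_mul_heatKernel {s : ℝ} (hs : 0 < s) (ξ : ℝ) :
    ∫ y, (1 - cos (y * ξ)) * heatKernel s y = 1 - exp (-(s * ξ ^ 2)) := by
  have hv : (2 * s).toNNReal ≠ 0 := by simpa using hs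
  have hcos : Integrable (fun y : ℝ => cos (ξ * y)) (gaussianReal 0 (2 * s).toNNReal) :=
    (integrable_const (1 : ℝ)).mono' (by fun_prop) (ae_of_all _ fun y => abs_cos_le_one _)
  calc ∫ y, (1 - cos (y * ξ)) * heatKernel s y
      = ∫ y, (1 - cos (ξ * y)) ∂gaussianReal 0 (2 * s).toNNReal := by
        rw [integral_gaussianReal_eq_integral_smul hv, heatKernel_eq_gaussianPDFReal hs]
        congr 1 with y
        rw [smul_eq_mul, mul_comm, mul_comm y]
    _ = 1 - exp (-(s * ξ ^ 2)) := by
        rw [integral_sub (integrable_const 1) hcos, integral_cos_mul_gaussianReal,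
          Real.coe_toNNReal _ (by positivity)]
        simp only [integral_const, probReal_univ, smul_eq_mul, mul_one, mul_zero, cos_zero]
        ring_nf

lemma heatKernel_nonneg {s : ℝ} (hs : 0 ≤ s) (y : ℝ) : 0 ≤ heatKernel s y := by
  unfold heatKernel; positivity

lemma integral_one_sub_cos_mul_integral_heatKernel_mul {w : ℝ → ℝ} (hw : Measurable w)
    (hw0 : ∀ s ∈ Ioi 0, 0 ≤ w s) (ξ : ℝ)
    (hint : IntegrableOn (fun s => (1 - exp (-(s * ξ ^ 2))) * w s) (Ioi 0)) :
    ∫ y, (1 - cos (y * ξ)) * ∫ s in Ioi 0, heatKernel s y * w s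
      = ∫ s in Ioi 0, (1 - exp (-(s * ξ ^ 2))) * w s := by
  set F : ℝ → ℝ → ℝ := fun y s => (1 - cos (y * ξ)) * (heatKernel s y * w s)
  have hF_nonneg : ∀ s ∈ Ioi (0 : ℝ), ∀ y, 0 ≤ F y s := fun s hs y =>
    mul_nonneg (by linarith [cos_le_one (y * ξ)])
      (mul_nonneg (heatKernel_nonneg (le_of_lt hs) y) (hw0 s hs))
  have hF_section : ∀ s ∈ Ioi (0 : ℝ), Integrable (F · s) := fun s hs => by
    simpa only [F, mul_assoc] using (integrable_one_sub_cos_mul_heatKernel hs ξ).mul_const (w s)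
  have hF_integral : ∀ s ∈ Ioi (0 : ℝ), ∫ y, F y s = (1 - exp (-(s * ξ ^ 2))) * w s :=
    fun s hs => by
      simp only [F, ← mul_assoc, integral_mul_const, integral_one_sub_cos_mul_heatKernel hs ξ]
  have hF : Integrable (Function.uncurry F) (volume.prod (volume.restrict (Ioi 0))) := by
    refine (integrable_prod_iff' ?_).2 ⟨?_, hint.congr ?_⟩
    · unfold F heatKernel; fun_prop
    · filter_upwards [ae_restrict_mem measurableSet_Ioi] with s hs using hF_section s hs
    · filter_upwards [ae_restrict_mem measurableSet_Ioi] with s hs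
      simp only [Function.uncurry_apply_pair, norm_of_nonneg (hF_nonneg s hs _), hF_integral s hs]
  calc ∫ y, (1 - cos (y * ξ)) * ∫ s in Ioi 0, heatKernel s y * w s
      = ∫ y, ∫ s in Ioi 0, F y s := by simp only [F, integral_const_mul]
    _ = ∫ s in Ioi 0, ∫ y, F y s := integral_integral_swap hF
    _ = ∫ s in Ioi 0, (1 - exp (-(s * ξ ^ 2))) * w s :=
        setIntegral_congr_fun measurableSet_Ioi hF_integral

section Bernstein

variable {α l : ℝ}

lemma integrableOn_one_sub_exp_neg_mul_mul_rpow (hα : 0 < α) (hα' : α < 1) (hl : 0 ≤ l) :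
    IntegrableOn (fun s => (1 - exp (-(l * s))) * s ^ (-1 - α)) (Ioi 0) := by
  have hmeas : AEStronglyMeasurable (fun s => (1 - exp (-(l * s))) * s ^ (-1 - α)) := by
    fun_prop
  rw [← Ioc_union_Ioi_eq_Ioi zero_le_one]
  refine IntegrableOn.union ?_ ?_
  · have hdom : IntegrableOn (fun s => l * s ^ (-α)) (Ioc 0 1) := by
      rw [integrableOn_Ioc_iff_integrableOn_Ioo]
      exact ((intervalIntegral.integrableOn_Ioo_rpow_iff one_pos).2 (by linarith)).const_mul l
    refine hdom.mono' hmeas.restrict ?_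
    filter_upwards [ae_restrict_mem measurableSet_Ioc] with s hs
    replace hs : 0 < s := hs.1
    rw [norm_of_nonneg (by have := one_sub_exp_neg_nonneg (mul_nonneg hl hs.le); positivity)]
    calc (1 - exp (-(l * s))) * s ^ (-1 - α) ≤ l * s * s ^ (-1 - α) := by
          gcongr; exact one_sub_exp_neg_le_self _
      _ = l * s ^ (-α) := by
          rw [mul_assoc, ← rpow_one_add' hs.le (by linarith)]; ring_nf
  · have hdom : IntegrableOn (fun s : ℝ => s ^ (-1 - α)) (Ioi 1) :=
      integrableOn_Ioi_rpow_of_lt (by linarith) one_pos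
    refine hdom.mono' hmeas.restrict ?_
    filter_upwards [ae_restrict_mem measurableSet_Ioi] with s hs
    have hs0 : 0 < s := one_pos.trans hs
    rw [norm_of_nonneg (by have := one_sub_exp_neg_nonneg (mul_nonneg hl hs0.le); positivity)]
    exact mul_le_of_le_one_left (by positivity) (one_sub_exp_neg_le_one _)

lemma tendsto_one_sub_exp_neg_mul_mul_rpow_nhdsGT_zero (hα' : α < 1) (hl : 0 ≤ l) :
    Tendsto (fun s => (1 - exp (-(l * s))) * s ^ (-α)) (𝓝[>] 0) (𝓝 0) := by
  have hbound : Tendsto (fun s : ℝ => l * s ^ (1 - α)) (𝓝[>] 0) (𝓝 0) := by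
    have h := ((continuousAt_rpow_const 0 (1 - α) (Or.inr (by linarith))).tendsto.const_mul l)
    rw [zero_rpow (by linarith), mul_zero] at h
    exact h.mono_left nhdsWithin_le_nhds
  refine squeeze_zero' ?_ ?_ hbound
  · filter_upwards [self_mem_nhdsWithin] with s (hs : 0 < s)
    have := one_sub_exp_neg_nonneg (mul_nonneg hl hs.le)
    positivity
  · filter_upwards [self_mem_nhdsWithin] with s (hs : 0 < s)
    calc (1 - exp (-(l * s))) * s ^ (-α) ≤ l * s * s ^ (-α) := by
          gcongr; exact one_sub_exp_neg_le_self _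
      _ = l * s ^ (1 - α) := by
          rw [mul_assoc, ← rpow_one_add' hs.le (by linarith)]; ring_nf

lemma tendsto_one_sub_exp_neg_mul_mul_rpow_atTop (hα : 0 < α) (hl : 0 ≤ l) :
    Tendsto (fun s => (1 - exp (-(l * s))) * s ^ (-α)) atTop (𝓝 0) := by
  refine squeeze_zero' ?_ ?_ (tendsto_rpow_neg_atTop hα)
  · filter_upwards [eventually_ge_atTop 0] with s hs
    have := one_sub_exp_neg_nonneg (mul_nonneg hl hs)
    positivity
  · filter_upwards [eventually_ge_atTop 0] with s hs
    exact mul_le_of_le_one_left (by positivity) (one_sub_exp_neg_le_one _)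

lemma hasDerivAt_one_sub_exp_neg_mul_mul_rpow {s : ℝ} (hs : 0 < s) :
    HasDerivAt (fun s => (1 - exp (-(l * s))) * s ^ (-α))
      (l * (s ^ (-α) * exp (-(l * s))) - α * ((1 - exp (-(l * s))) * s ^ (-1 - α))) s := by
  have h := ((((hasDerivAt_id s).const_mul l).neg.exp).const_sub 1).mul
    (hasDerivAt_rpow_const (p := -α) (Or.inl hs.ne'))
  refine h.congr_deriv ?_
  rw [show -α - 1 = -1 - α by ring]
  simp only [id, Pi.neg_apply]
  ring

lemma integral_one_sub_exp_neg_mul_mul_rpow (hα : 0 < α) (hα' : α < 1) (hl : 0 < l) :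
    ∫ s in Ioi 0, (1 - exp (-(l * s))) * s ^ (-1 - α) = Gamma (1 - α) / α * l ^ α := by
  have hA := integrableOn_one_sub_exp_neg_mul_mul_rpow hα hα' hl.le
  have hG : IntegrableOn (fun s => s ^ (-α) * exp (-(l * s))) (Ioi 0) := by
    simpa [neg_mul] using integrableOn_rpow_mul_exp_neg_mul_rpow (by linarith) one_pos hl
  have hGamma : ∫ s in Ioi 0, s ^ (-α) * exp (-(l * s)) = l ^ (α - 1) * Gamma (1 - α) := by
    rw [← sub_sub_cancel_left 1 α, integral_rpow_mul_exp_neg_mul_Ioi (by linarith) hl, one_div,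
      inv_rpow hl.le, ← rpow_neg hl.le]
    ring_nf
  have hFTC := integral_Ioi_of_hasDerivAt_of_tendsto
    (continuousWithinAt_Ioi_iff_Ici.1 (by
      simpa [ContinuousWithinAt] using tendsto_one_sub_exp_neg_mul_mul_rpow_nhdsGT_zero hα' hl.le))
    (fun s hs => hasDerivAt_one_sub_exp_neg_mul_mul_rpow hs)
    ((hG.const_mul l).sub (hA.const_mul α))
    (tendsto_one_sub_exp_neg_mul_mul_rpow_atTop hα hl.le)
  rw [integral_sub (hG.const_mul l) (hA.const_mul α), integral_const_mul, integral_const_mul,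
    hGamma] at hFTC
  have : l * l ^ (α - 1) = l ^ α := by
    rw [← rpow_one_add' hl.le (by linarith)]; ring_nf
  rw [div_mul_eq_mul_div, eq_div_iff hα.ne']
  simp only [mul_zero, neg_zero, exp_zero, sub_self, zero_mul] at hFTC
  linear_combination -hFTC + Gamma (1 - α) * this

end Bernstein

lemma levyDensity_eq (α y : ℝ) :
    levyDensity α y =
      α / Gamma (1 - α) * ∫ s in Ioi 0, heatKernel s y * (exp (-s) * s ^ (-1 - α)) := by
  simp only [levyDensity, heatKernel, mul_assoc]

lemma one_sub_exp_neg_mul_sq_mul_exp_neg (s ξ : ℝ) :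
    (1 - exp (-(s * ξ ^ 2))) * exp (-s) =
      (1 - exp (-((1 + ξ ^ 2) * s))) - (1 - exp (-(1 * s))) := by
  rw [sub_mul, one_mul, ← exp_add]; ring_nf

/-- The Lévy–Khinchine representation of `(1+ξ²)^α` for `0 < α < 1`:
`(1+ξ²)^α = 1 + ∫_ℝ (1 − cos(yξ)) m(y) dy`. -/
theorem levy_khinchine_one_add_sq_rpow
    (α : ℝ) (hα : 0 < α) (hα' : α < 1) :
    ∀ ξ : ℝ, (1 + ξ ^ 2) ^ α = 1 + ∫ y : ℝ, (1 - Real.cos (y * ξ)) * levyDensity α y := by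
  intro ξ
  have hweight : (fun s => (1 - exp (-(s * ξ ^ 2))) * (exp (-s) * s ^ (-1 - α))) = fun s =>
      (1 - exp (-((1 + ξ ^ 2) * s))) * s ^ (-1 - α) - (1 - exp (-(1 * s))) * s ^ (-1 - α) := by
    ext s; rw [← mul_assoc, one_sub_exp_neg_mul_sq_mul_exp_neg, sub_mul]
  have hint_ξ := integrableOn_one_sub_exp_neg_mul_mul_rpow hα hα' (l := 1 + ξ ^ 2) (by positivity)
  have hint_one := integrableOn_one_sub_exp_neg_mul_mul_rpow hα hα' (l := 1) zero_le_one
  have hheat := integral_one_sub_cos_mul_integral_heatKernel_mul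
    (w := fun s => exp (-s) * s ^ (-1 - α)) (by fun_prop)
    (fun s hs => mul_nonneg (exp_pos _).le (rpow_nonneg (le_of_lt hs) _)) ξ
    (by rw [hweight]; exact hint_ξ.sub hint_one)
  have hΓ : Gamma (1 - α) ≠ 0 := (Gamma_pos_of_pos (by linarith)).ne'
  simp_rw [levyDensity_eq, mul_left_comm _ (α / Gamma (1 - α))]
  rw [integral_const_mul, hheat, hweight, integral_sub hint_ξ hint_one,
    integral_one_sub_exp_neg_mul_mul_rpow hα hα' (by positivity),
    integral_one_sub_exp_neg_mul_mul_rpow hα hα' one_pos, one_rpow]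
  field_simp
  ring
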